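/- (Section 5, verification of d_jk[lm] = −b_jkp a_lm^p) Let 𝔤 be a Lie algebra over a field of characteristic zero and Π : 𝔤 → 𝔤 a linear idempotent map (Π ∘ Π = Π) whose kernel is a Lie subalgebra of 𝔤, and let R : 𝔤 × 𝔤 → 𝔤 be a bilinear map with values in ker Π. Define a(ζ,τ) = −½Π[ζ,τ], b(ξ,η,ζ) = −½Π[[ξ,η],ζ] + ½Π[Π[ξ,η],ζ] − 2Π[R(ξ,η),ζ], and d(ξ,η,ζ,τ) = ½Π[τ,[[ξ,η],ζ]] − ½Π[τ,Π[[ξ,η],ζ]] − ½Π[τ,[Π[ξ,η],ζ]] + ½Π[τ,Π[Π[ξ,η],ζ]] − ½Π[Π[τ,[ξ,η]],ζ] + ½Π[Π[τ,Π[ξ,η]],ζ] + 2Π[τ,[R(ξ,η),ζ]] − 2Π[τ,Π[R(ξ,η),ζ]] − 2Π[Π[τ,R(ξ,η)],ζ]. Then for all ξ, η, ζ, τ ∈ 𝔤, ½(d(ξ,η,ζ,τ) − d(ξ,η,τ,ζ)) = −b(ξ, η, a(ζ,τ)). -/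

import Mathlib

/-!
Writing `A = ⁅ξ, η⁆` and `r = R ξ η`, the tensor `d` splits as `½ T(A) - ½ T(Π A) + 2 T(r)`
with `T(X)(ζ, τ) = Π⁅τ, ⁅X, ζ⁆⁆ - Π⁅τ, Π⁅X, ζ⁆⁆ - Π⁅Π⁅τ, X⁆, ζ⁆` (`dSummand`). By the Jacobi
identity and antisymmetry, the alternation of `T(X)` in `(ζ, τ)` is `-Π⁅X, ⁅ζ, τ⁆⁆`, while
`b(ξ, η, W) = -½ Π⁅A - Π A, W⁆ - 2 Π⁅r, W⁆`. The two sides therefore differ by terms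
`Π⁅X, ⁅ζ, τ⁆ - Π⁅ζ, τ⁆⁆` with `X ∈ {A - Π A, r}`, and both entries of these brackets lie in the
subalgebra `ker Π`.
-/

/-- The curvature tensor of formula (3.2). -/
def bTensor {K : Type*} [Field K] {L : Type*} [LieRing L] [LieAlgebra K L]
    (P : L →ₗ[K] L) (R : L →ₗ[K] L →ₗ[K] L) (ξ η ζ : L) : L :=
  -(1/2 : K) • P ⁅⁅ξ, η⁆, ζ⁆ + (1/2 : K) • P ⁅P ⁅ξ, η⁆, ζ⁆ - (2 : K) • P ⁅R ξ η, ζ⁆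

/-- The tensor `d = ∇²b` of formula (5.6). -/
def dTensor {K : Type*} [Field K] {L : Type*} [LieRing L] [LieAlgebra K L]
    (P : L →ₗ[K] L) (R : L →ₗ[K] L →ₗ[K] L) (ξ η ζ τ : L) : L :=
  (1/2 : K) • P ⁅τ, ⁅⁅ξ, η⁆, ζ⁆⁆ - (1/2 : K) • P ⁅τ, P ⁅⁅ξ, η⁆, ζ⁆⁆
    - (1/2 : K) • P ⁅τ, ⁅P ⁅ξ, η⁆, ζ⁆⁆ + (1/2 : K) • P ⁅τ, P ⁅P ⁅ξ, η⁆, ζ⁆⁆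
    - (1/2 : K) • P ⁅P ⁅τ, ⁅ξ, η⁆⁆, ζ⁆ + (1/2 : K) • P ⁅P ⁅τ, P ⁅ξ, η⁆⁆, ζ⁆
    + (2 : K) • P ⁅τ, ⁅R ξ η, ζ⁆⁆ - (2 : K) • P ⁅τ, P ⁅R ξ η, ζ⁆⁆
    - (2 : K) • P ⁅P ⁅τ, R ξ η⁆, ζ⁆

section Projection

variable {K : Type*} [CommRing K] {L : Type*} [LieRing L] [LieAlgebra K L] (P : L →ₗ[K] L)

def dSummand (X ζ τ : L) : L :=
  P ⁅τ, ⁅X, ζ⁆⁆ - P ⁅τ, P ⁅X, ζ⁆⁆ - P ⁅P ⁅τ, X⁆, ζ⁆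

theorem dSummand_sub_dSummand_swap (X ζ τ : L) :
    dSummand P X ζ τ - dSummand P X τ ζ = -P ⁅X, ⁅ζ, τ⁆⁆ := by
  have jacobi : ⁅τ, ⁅X, ζ⁆⁆ - ⁅ζ, ⁅X, τ⁆⁆ = -⁅X, ⁅ζ, τ⁆⁆ := by
    rw [leibniz_lie X ζ τ, ← lie_skew τ ⁅X, ζ⁆]
    abel
  have skew₁ : P ⁅P ⁅ζ, X⁆, τ⁆ = P ⁅τ, P ⁅X, ζ⁆⁆ := by
    rw [← lie_skew ζ X, map_neg P ⁅X, ζ⁆, neg_lie, lie_skew]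
  have skew₂ : P ⁅P ⁅τ, X⁆, ζ⁆ = P ⁅ζ, P ⁅X, τ⁆⁆ := by
    rw [← lie_skew τ X, map_neg P ⁅X, τ⁆, neg_lie, lie_skew]
  unfold dSummand
  rw [skew₁, skew₂, ← map_neg, ← jacobi, map_sub]
  abel

theorem lie_map_eq_of_map_eq_zero (hidem : ∀ x : L, P (P x) = P x)
    (hker : ∀ x y : L, P x = 0 → P y = 0 → P ⁅x, y⁆ = 0)
    {x : L} (hx : P x = 0) (y : L) : P ⁅x, P y⁆ = P ⁅x, y⁆ := by
  have h := hker x (y - P y) hx (by rw [map_sub, hidem, sub_self])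
  rwa [lie_sub, map_sub, sub_eq_zero, eq_comm] at h

end Projection

section Tensors

variable {K : Type*} [Field K] {L : Type*} [LieRing L] [LieAlgebra K L]
  (P : L →ₗ[K] L) (R : L →ₗ[K] L →ₗ[K] L)

theorem dTensor_eq_dSummand (ξ η ζ τ : L) :
    dTensor P R ξ η ζ τ = (1/2 : K) • dSummand P ⁅ξ, η⁆ ζ τ
      - (1/2 : K) • dSummand P (P ⁅ξ, η⁆) ζ τ + (2 : K) • dSummand P (R ξ η) ζ τ := by
  unfold dTensor dSummand
  module

theorem bTensor_eq (ξ η W : L) :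
    bTensor P R ξ η W = -(1/2 : K) • P ⁅⁅ξ, η⁆ - P ⁅ξ, η⁆, W⁆ - (2 : K) • P ⁅R ξ η, W⁆ := by
  unfold bTensor
  rw [sub_lie, map_sub]
  module

end Tensors

/-- Section 5, verification of `d_jk[lm] = −b_jkp a_lm^p`: if `Π` is an
idempotent projection whose kernel is a subalgebra, and `R` takes values in `ker Π`,
then `½(d(ξ,η,ζ,τ) − d(ξ,η,τ,ζ)) = −b(ξ,η,a(ζ,τ))` where `a(ζ,τ) = −½Π[ζ,τ]`. -/
theorem d_alt_eq_neg_b_a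
    {K : Type*} [Field K] [CharZero K]
    {L : Type*} [LieRing L] [LieAlgebra K L]
    (P : L →ₗ[K] L) (R : L →ₗ[K] L →ₗ[K] L)
    (hidem : ∀ x : L, P (P x) = P x)
    (hker : ∀ x y : L, P x = 0 → P y = 0 → P ⁅x, y⁆ = 0)
    (hRker : ∀ x y : L, P (R x y) = 0)
    (ξ η ζ τ : L) :
    (1/2 : K) • (dTensor P R ξ η ζ τ - dTensor P R ξ η τ ζ)
      = -(bTensor P R ξ η (-(1/2 : K) • P ⁅ζ, τ⁆)) := by
  have hA := dSummand_sub_dSummand_swap P ⁅ξ, η⁆ ζ τ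
  have hPA := dSummand_sub_dSummand_swap P (P ⁅ξ, η⁆) ζ τ
  have hr := dSummand_sub_dSummand_swap P (R ξ η) ζ τ
  have hA_ker : P (⁅ξ, η⁆ - P ⁅ξ, η⁆) = 0 := by rw [map_sub, hidem, sub_self]
  have kA := lie_map_eq_of_map_eq_zero P hidem hker hA_ker ⁅ζ, τ⁆
  have kr := lie_map_eq_of_map_eq_zero P hidem hker (hRker ξ η) ⁅ζ, τ⁆
  simp only [sub_lie, map_sub] at kA
  rw [dTensor_eq_dSummand, dTensor_eq_dSummand, bTensor_eq]
  simp only [lie_smul, map_smul, sub_lie, map_sub]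
  linear_combination (norm := module)
    (1/4 : K) • hA - (1/4 : K) • hPA + hr + (1/4 : K) • kA + kr
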